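/- If Z is a valuation on convex polytopes in ℝⁿ taking values in an abelian group, then the map P ↦ Z([P, o]) is also a valuation on the set of convex polytopes. -/

import Mathlib

/-!
Write `[C, o]` for `convexHull ℝ (C ∪ {0})`. For convex nonempty `C`, the points of `[C, o]` are
exactly the `t • z` with `z ∈ C` and `0 ≤ t ≤ 1`; so `[P ∪ Q, o] = [P, o] ∪ [Q, o]` as soon as
`P ∪ Q` is convex. For the intersection, let `x = s • p = t • q` with `p ∈ P`, `q ∈ Q` and
`0 < s ≤ t ≤ 1`. Then `q = (s / t) • p`, and the piece `{c • p | s / t ≤ c ≤ 1}` of the ray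
through `p` lies in the convex set `P ∪ Q`; being connected and covered by the closed sets `P`
and `Q`, it contains a point `r = c • p` of `P ∩ Q`, and `x = (s / c) • r ∈ [P ∩ Q, o]`.
Hence `[P ∩ Q, o] = [P, o] ∩ [Q, o]`, and the valuation property of `Z` applies to `[P, o]` and
`[Q, o]`, which are again polytopes.
-/

/-- A (nonempty, compact) convex polytope: the convex hull of a nonempty finite set. -/
def IsPolytope {n : ℕ} (P : Set (Fin n → ℝ)) : Prop :=
  ∃ S : Finset (Fin n → ℝ), S.Nonempty ∧ P = convexHull ℝ (S : Set (Fin n → ℝ))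

open Set

section ConeOverOrigin

variable {𝕜 E : Type*} [Field 𝕜] [LinearOrder 𝕜] [IsStrictOrderedRing 𝕜]
  [AddCommGroup E] [Module 𝕜 E]

theorem smul_mem_convexHull_union_zero {C : Set E} {z : E} (hz : z ∈ C) {t : 𝕜}
    (ht : t ∈ Icc (0 : 𝕜) 1) : t • z ∈ convexHull 𝕜 (C ∪ {0}) :=
  (convex_convexHull 𝕜 _).smul_mem_of_zero_mem
    (subset_convexHull 𝕜 _ (mem_union_right C (mem_singleton 0)))
    (subset_convexHull 𝕜 _ (mem_union_left _ hz)) ht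

theorem mem_convexHull_union_zero_iff {C : Set E} (hC : Convex 𝕜 C) (hne : C.Nonempty) {x : E} :
    x ∈ convexHull 𝕜 (C ∪ {0}) ↔ ∃ t ∈ Icc (0 : 𝕜) 1, ∃ z ∈ C, x = t • z := by
  rw [union_singleton, convexHull_insert hne, hC.convexHull_eq, convexJoin_singleton_left]
  simp only [mem_iUnion, segment_eq_image, smul_zero, zero_add, mem_image, exists_prop]
  grind

theorem convexHull_union_union_zero {P Q : Set E} (hU : Convex 𝕜 (P ∪ Q))
    (hUne : (P ∪ Q).Nonempty) :
    convexHull 𝕜 (P ∪ Q ∪ {0}) = convexHull 𝕜 (P ∪ {0}) ∪ convexHull 𝕜 (Q ∪ {0}) := by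
  refine subset_antisymm (fun x hx => ?_) (union_subset (convexHull_mono (by grind))
    (convexHull_mono (by grind)))
  obtain ⟨t, ht, z, hz | hz, rfl⟩ := (mem_convexHull_union_zero_iff hU hUne).1 hx
  · exact Or.inl (smul_mem_convexHull_union_zero hz ht)
  · exact Or.inr (smul_mem_convexHull_union_zero hz ht)

end ConeOverOrigin

section Real

variable {E : Type*} [AddCommGroup E] [Module ℝ E]

theorem smul_mem_segment_smul {u c : ℝ} (hc : c ∈ Icc u 1) (p : E) :
    c • p ∈ segment ℝ (u • p) p := by
  have h := image_segment ℝ (LinearMap.toSpanSingleton ℝ E p).toAffineMap u 1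
  simp only [LinearMap.coe_toAffineMap, LinearMap.toSpanSingleton_apply, one_smul] at h
  rw [← h, segment_eq_Icc (hc.1.trans hc.2)]
  exact mem_image_of_mem _ hc

variable [TopologicalSpace E] [ContinuousSMul ℝ E]

theorem exists_smul_mem_inter_of_convex_union {P Q : Set E} (hP : IsClosed P) (hQ : IsClosed Q)
    (hU : Convex ℝ (P ∪ Q)) {p : E} {u : ℝ} (hp : p ∈ P) (hup : u • p ∈ Q) (hu : u ≤ 1) :
    ∃ c ∈ Icc u 1, c • p ∈ P ∩ Q := by
  have hcover : (fun c : ℝ => c • p) '' Icc u 1 ⊆ P ∪ Q := by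
    rintro _ ⟨c, hc, rfl⟩
    exact hU.segment_subset (Or.inr hup) (Or.inl hp) (smul_mem_segment_smul hc p)
  have hconn : IsPreconnected ((fun c : ℝ => c • p) '' Icc u 1) :=
    isPreconnected_Icc.image _ (continuous_id.smul continuous_const).continuousOn
  obtain ⟨_, ⟨c, hc, rfl⟩, hcpq⟩ := isPreconnected_closed_iff.1 hconn P Q hP hQ hcover
    ⟨p, ⟨1, ⟨hu, le_rfl⟩, one_smul ℝ p⟩, hp⟩ ⟨u • p, ⟨u, ⟨le_rfl, hu⟩, rfl⟩, hup⟩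
  exact ⟨c, hc, hcpq⟩

theorem mem_convexHull_inter_union_zero_of_le {P Q : Set E} (hP : IsClosed P) (hQ : IsClosed Q)
    (hU : Convex ℝ (P ∪ Q)) {x p q : E} {s t : ℝ} (hp : p ∈ P) (hq : q ∈ Q) (hs : 0 ≤ s)
    (hst : s ≤ t) (ht : t ≤ 1) (hxp : x = s • p) (hxq : x = t • q) :
    x ∈ convexHull ℝ (P ∩ Q ∪ {0}) := by
  rcases hs.eq_or_lt with rfl | hs
  · rw [hxp, zero_smul]
    exact subset_convexHull ℝ _ (mem_union_right _ (mem_singleton 0))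
  have ht0 : 0 < t := hs.trans_le hst
  have hqp : q = (s / t) • p := by
    rw [div_eq_inv_mul, mul_smul, ← hxp, hxq, inv_smul_smul₀ ht0.ne']
  obtain ⟨c, hc, hcPQ⟩ :=
    exists_smul_mem_inter_of_convex_union hP hQ hU hp (hqp ▸ hq) (div_le_one_of_le₀ hst ht0.le)
  have hc0 : 0 < c := (div_pos hs ht0).trans_le hc.1
  have hsc : s ≤ c :=
    calc s ≤ s / t := le_div_self hs.le ht0 ht
      _ ≤ c := hc.1
  rw [show x = (s / c) • (c • p) by rw [smul_smul, div_mul_cancel₀ _ hc0.ne', hxp]]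
  exact smul_mem_convexHull_union_zero hcPQ ⟨by positivity, (div_le_one hc0).2 hsc⟩

theorem convexHull_inter_union_zero {P Q : Set E} (hPc : Convex ℝ P) (hQc : Convex ℝ Q)
    (hP : IsClosed P) (hQ : IsClosed Q) (hU : Convex ℝ (P ∪ Q)) (hI : (P ∩ Q).Nonempty) :
    convexHull ℝ (P ∩ Q ∪ {0}) = convexHull ℝ (P ∪ {0}) ∩ convexHull ℝ (Q ∪ {0}) := by
  refine subset_antisymm (subset_inter (convexHull_mono (by grind)) (convexHull_mono (by grind)))
    fun x ⟨hxP, hxQ⟩ => ?_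
  obtain ⟨s, hs, p, hp, hxp⟩ :=
    (mem_convexHull_union_zero_iff hPc (hI.mono inter_subset_left)).1 hxP
  obtain ⟨t, ht, q, hq, hxq⟩ :=
    (mem_convexHull_union_zero_iff hQc (hI.mono inter_subset_right)).1 hxQ
  rcases le_total s t with hst | hts
  · exact mem_convexHull_inter_union_zero_of_le hP hQ hU hp hq hs.1 hst ht.2 hxp hxq
  · rw [inter_comm]
    exact mem_convexHull_inter_union_zero_of_le hQ hP (union_comm P Q ▸ hU) hq hp ht.1 hts hs.2
      hxq hxp

end Real

namespace IsPolytope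

variable {n : ℕ} {P : Set (Fin n → ℝ)}

theorem convex (h : IsPolytope P) : Convex ℝ P := by
  obtain ⟨S, -, rfl⟩ := h
  exact convex_convexHull ℝ _

theorem nonempty (h : IsPolytope P) : P.Nonempty := by
  obtain ⟨S, hS, rfl⟩ := h
  exact hS.to_set.convexHull

theorem isClosed (h : IsPolytope P) : IsClosed P := by
  obtain ⟨S, -, rfl⟩ := h
  exact (S.finite_toSet.isCompact_convexHull ℝ).isClosed

theorem convexHull_union_zero (h : IsPolytope P) : IsPolytope (convexHull ℝ (P ∪ {0})) := by
  obtain ⟨S, -, rfl⟩ := h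
  refine ⟨insert 0 S, Finset.insert_nonempty 0 S, ?_⟩
  rw [convexHull_convexHull_union_left, Finset.coe_insert, insert_eq, union_comm]

end IsPolytope

/-- If `Z` is a valuation on convex polytopes with values in an abelian group, then
`P ↦ Z [P, o]` is also a valuation on convex polytopes. -/
theorem valuation_conv_origin {n : ℕ} {A : Type*} [AddCommGroup A]
    (Z : Set (Fin n → ℝ) → A)
    (hval : ∀ P Q : Set (Fin n → ℝ), IsPolytope P → IsPolytope Q →
      IsPolytope (P ∪ Q) → IsPolytope (P ∩ Q) →
      Z P + Z Q = Z (P ∪ Q) + Z (P ∩ Q)) :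
    ∀ P Q : Set (Fin n → ℝ), IsPolytope P → IsPolytope Q →
      IsPolytope (P ∪ Q) → IsPolytope (P ∩ Q) →
      Z (convexHull ℝ (P ∪ {0})) + Z (convexHull ℝ (Q ∪ {0}))
        = Z (convexHull ℝ ((P ∪ Q) ∪ {0})) + Z (convexHull ℝ ((P ∩ Q) ∪ {0})) := by
  intro P Q hP hQ hU hI
  have hunion := convexHull_union_union_zero (𝕜 := ℝ) hU.convex hU.nonempty
  have hinter := convexHull_inter_union_zero hP.convex hQ.convex hP.isClosed hQ.isClosed
    hU.convex hI.nonempty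
  rw [hunion, hinter]
  exact hval _ _ hP.convexHull_union_zero hQ.convexHull_union_zero
    (hunion ▸ hU.convexHull_union_zero) (hinter ▸ hI.convexHull_union_zero)
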